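/- arXiv:2209.11638 — 2 statements merged into one kernel-verified Lean document; each statement's English description precedes it below -/
import Mathlib

section
/- The first-order condition for the GSP-MAP filter f₁: the diagonal matrix F₁ minimizing trace(C_x (I + F₁) C_x⁻¹ (I + F₁)) + trace(C_x F₁ A F₁) over diagonal matrices F₁, where A = G̃ᵀ C_w⁻¹ G̃ and C_x, C_w positive definite, satisfies diag(F₁) = −(C_x ∘ C_x⁻¹ + C_x ∘ A)⁻¹ 1, provided C_x ∘ (C_x⁻¹ + A) is invertible. -/
/-!
Writing `D = diagonal v`, the objective is a quadratic polynomial in `v`: cyclicity of the trace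
gives `trace (P D Q D) = vᵀ (P ∘ Qᵀ) v`, so
`J v = N + 2 ∑ vᵢ + vᵀ M v` with `M = C_x ∘ (C_x⁻¹ + A)` symmetric.
At a minimizer `v`, the increment of `J` along the line `v + t g` with `g = M v + 1` is
`2 (g ⬝ g) t + (gᵀ M g) t²`; it is nonnegative for every `t`, so its discriminant forces `g = 0`,
and inverting `M` gives the claimed filter.
-/

open Matrix

namespace Matrix

variable {n R : Type*}

theorem IsSymm.hadamard [Mul R] {A B : Matrix n n R} (hA : A.IsSymm) (hB : B.IsSymm) :
    (A ⊙ B).IsSymm := by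
  rw [IsSymm, transpose_hadamard, hA.eq, hB.eq]

theorem IsSymm.transpose_mul_mul [Fintype n] [CommSemiring R] {A : Matrix n n R}
    (hA : A.IsSymm) (B : Matrix n n R) : (Bᵀ * A * B).IsSymm := by
  rw [IsSymm, transpose_mul, transpose_mul, transpose_transpose, hA.eq, Matrix.mul_assoc]

theorem trace_mul_diagonal_mul_diagonal [Fintype n] [DecidableEq n] [CommSemiring R]
    (P Q : Matrix n n R) (v : n → R) :
    trace (P * diagonal v * Q * diagonal v) = v ⬝ᵥ (P ⊙ Qᵀ) *ᵥ v := by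
  rw [dotProduct_mulVec, dotProduct_vecMul_hadamard, transpose_mul, transpose_transpose,
    diagonal_transpose, trace_mul_comm, Matrix.mul_assoc, Matrix.mul_assoc]

theorem trace_mul_one_add_diagonal_mul_inv_mul_one_add_diagonal [Fintype n] [DecidableEq n]
    [CommRing R] {C : Matrix n n R} (hC : IsUnit C) (v : n → R) :
    trace (C * (1 + diagonal v) * C⁻¹ * (1 + diagonal v)) =
      Fintype.card n + 2 * (1 ⬝ᵥ v) + v ⬝ᵥ (C ⊙ C⁻¹ᵀ) *ᵥ v := by
  have hdet : IsUnit C.det := (isUnit_iff_isUnit_det C).mp hC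
  have hinv : C * C⁻¹ = 1 := mul_nonsing_inv C hdet
  have hexpand : C * (1 + diagonal v) * C⁻¹ * (1 + diagonal v) =
      C * C⁻¹ + C * C⁻¹ * diagonal v + C * diagonal v * C⁻¹ +
        C * diagonal v * C⁻¹ * diagonal v := by
    noncomm_ring
  have hconj : trace (C * diagonal v * C⁻¹) = trace (diagonal v) := by
    rw [trace_mul_comm, ← Matrix.mul_assoc, nonsing_inv_mul C hdet, Matrix.one_mul]
  rw [hexpand, trace_add, trace_add, trace_add, hconj, hinv, Matrix.one_mul, trace_one,
    trace_diagonal, trace_mul_diagonal_mul_diagonal, one_dotProduct]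
  ring

theorem IsSymm.mulVec_add_eq_zero_of_forall_le [Fintype n] [Field R] [LinearOrder R]
    [IsStrictOrderedRing R]    {M : Matrix n n R} (hM : M.IsSymm) {b v : n → R}
    (hv : ∀ u, 2 * (b ⬝ᵥ v) + v ⬝ᵥ M *ᵥ v ≤ 2 * (b ⬝ᵥ u) + u ⬝ᵥ M *ᵥ u) :
    M *ᵥ v + b = 0 := by
  set g := M *ᵥ v + b
  have hsymm : v ⬝ᵥ M *ᵥ g = M *ᵥ v ⬝ᵥ g := by
    rw [dotProduct_mulVec, ← mulVec_transpose, hM.eq]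
  have hg : g ⬝ᵥ g = M *ᵥ v ⬝ᵥ g + b ⬝ᵥ g := add_dotProduct _ _ _
  have hline : ∀ t : R, 2 * (b ⬝ᵥ (v + t • g)) + (v + t • g) ⬝ᵥ M *ᵥ (v + t • g) =
        2 * (b ⬝ᵥ v) + v ⬝ᵥ M *ᵥ v + (g ⬝ᵥ M *ᵥ g) * (t * t) + 2 * (g ⬝ᵥ g) * t := by
    intro t
    simp only [mulVec_add, mulVec_smul, dotProduct_add, add_dotProduct, dotProduct_smul,
      smul_dotProduct, smul_eq_mul]
    linear_combination t * hsymm + t * dotProduct_comm g (M *ᵥ v) - 2 * t * hg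
  have hdiscrim : discrim (g ⬝ᵥ M *ᵥ g) (2 * (g ⬝ᵥ g)) 0 ≤ 0 :=
    discrim_le_zero fun t => by linarith [hv (v + t • g), hline t]
  have hgg : g ⬝ᵥ g = 0 := by
    rw [discrim] at hdiscrim
    nlinarith [sq_nonneg (g ⬝ᵥ g)]
  exact dotProduct_self_eq_zero.mp hgg

end Matrix

/-- First-order condition for the GSP-MAP filter `f₁`: any diagonal minimizer of
`trace(C_x (I + F₁) C_x⁻¹ (I + F₁)) + trace(C_x F₁ A F₁)` over diagonal matrices,
with `A = G̃ᵀ C_w⁻¹ G̃`, has diagonal `−(C_x ∘ C_x⁻¹ + C_x ∘ A)⁻¹ 1`. -/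
theorem gsp_map_filter1_foc {N : ℕ}
    (Cx Cw Gt : Matrix (Fin N) (Fin N) ℝ)
    (hCx : Cx.PosDef) (hCw : Cw.PosDef) :
    let A : Matrix (Fin N) (Fin N) ℝ := Gtᵀ * Cw⁻¹ * Gt
    let J : (Fin N → ℝ) → ℝ := fun v =>
      Matrix.trace (Cx * (1 + Matrix.diagonal v) * Cx⁻¹ * (1 + Matrix.diagonal v)) +
        Matrix.trace (Cx * Matrix.diagonal v * A * Matrix.diagonal v)
    IsUnit (Matrix.hadamard Cx (Cx⁻¹ + A)) →
      ∀ v : Fin N → ℝ, (∀ u, J v ≤ J u) →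
        v = -((Matrix.hadamard Cx Cx⁻¹ + Matrix.hadamard Cx A)⁻¹ *ᵥ
          (fun _ => (1 : ℝ))) := by
  intro A J hU v hmin
  have hCxSymm : Cx.IsSymm := isHermitian_iff_isSymm.mp hCx.1
  have hASymm : A.IsSymm := (isHermitian_iff_isSymm.mp hCw.1).inv.transpose_mul_mul Gt
  set M := Cx ⊙ Cx⁻¹ + Cx ⊙ A
  have hJ : ∀ u, J u = N + (2 * (1 ⬝ᵥ u) + u ⬝ᵥ M *ᵥ u) := fun u => by
    simp only [J]
    rw [trace_mul_one_add_diagonal_mul_inv_mul_one_add_diagonal hCx.isUnit,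
      trace_mul_diagonal_mul_diagonal, hCxSymm.inv.eq, hASymm.eq, add_mulVec, dotProduct_add,
      Fintype.card_fin]
    ring
  have hMSymm : M.IsSymm := (hCxSymm.hadamard hCxSymm.inv).add (hCxSymm.hadamard hASymm)
  have hMv : M *ᵥ v + 1 = 0 := hMSymm.mulVec_add_eq_zero_of_forall_le fun u => by
    simpa only [hJ, add_le_add_iff_left] using hmin u
  have : Invertible M := (hadamard_add Cx Cx⁻¹ A ▸ hU).invertible
  have hMv' : 1 = M *ᵥ -v := by rw [mulVec_neg, neg_eq_of_add_eq_zero_right hMv]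
  show v = -(M⁻¹ *ᵥ 1)
  rw [inv_mulVec_eq_vec hMv', neg_neg]
end

section
/- The first-order condition for the GSP-MAP filter f₂: the diagonal matrix F₂ minimizing ½ trace(C_w F₂ C_x⁻¹ F₂) − trace(G̃ F₂) + ½ trace(C_w F₂ A F₂) over diagonal matrices F₂, with A = G̃ᵀ C_w⁻¹ G̃, satisfies diag(F₂) = (C_w ∘ C_x⁻¹ + C_w ∘ A)⁻¹ diag(G̃), provided C_w ∘ (C_x⁻¹ + A) is invertible. -/
/-!
With `M = C_w ∘ (C_x⁻¹ + A)`, the identity `trace (C D_a B D_b) = bᵀ (C ∘ Bᵀ) a` for diagonal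
`D_a, D_b` turns the objective into the quadratic `½ vᵀ M v − diag(G̃)ᵀ v`, and `M` is symmetric
because `C_w`, `C_x⁻¹` and `A` are. Moving a minimiser `v` along the residual `r = M v − diag(G̃)`
changes the objective by `t ‖r‖² + O(t²)`, so `r = 0`; inverting `M` gives the formula.
-/

open Matrix

section Trace

variable {n R : Type*} [Fintype n] [DecidableEq n] [CommSemiring R]

theorem Matrix.trace_mul_diagonal_mul_mul_diagonal (C B : Matrix n n R) (a b : n → R) :
    trace (C * diagonal a * B * diagonal b) = b ⬝ᵥ (C ⊙ Bᵀ) *ᵥ a := by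
  simp only [trace, diag, mul_apply, diagonal_apply, dotProduct, mulVec, hadamard_apply,
    transpose_apply, mul_ite, mul_zero, Finset.sum_ite_eq', Finset.mem_univ, if_true,
    Finset.mul_sum, Finset.sum_mul]
  refine Finset.sum_congr rfl fun k _ => Finset.sum_congr rfl fun l _ => ?_
  ring

theorem Matrix.trace_mul_diagonal (G : Matrix n n R) (b : n → R) :
    trace (G * diagonal b) = G.diag ⬝ᵥ b := by
  simp [trace, mul_diagonal, dotProduct]

end Trace

section Quadratic

variable {n 𝕜 : Type*} [Fintype n] [Field 𝕜] [LinearOrder 𝕜] [IsStrictOrderedRing 𝕜]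

theorem eq_zero_of_forall_nonneg_mul_add_mul_sq {a b : 𝕜} (h : ∀ t, 0 ≤ b * t + a * t ^ 2) :
    b = 0 := by
  by_contra hb
  have hc : 0 < |a| + 1 := by positivity
  have ht := h (-b / (|a| + 1))
  have hb2 : 0 < b ^ 2 := by positivity
  field_simp at ht
  nlinarith [le_abs_self a]

def quadraticObjective (M : Matrix n n 𝕜) (g v : n → 𝕜) : 𝕜 :=
  (1 / 2) * (v ⬝ᵥ M *ᵥ v) - g ⬝ᵥ v

theorem quadraticObjective_add_smul {M : Matrix n n 𝕜} (hM : M.IsSymm) (g v w : n → 𝕜) (t : 𝕜) :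
    quadraticObjective M g (v + t • w) =
      quadraticObjective M g v + (w ⬝ᵥ (M *ᵥ v - g)) * t + (1 / 2) * (w ⬝ᵥ M *ᵥ w) * t ^ 2 := by
  have hsymm : v ⬝ᵥ M *ᵥ w = w ⬝ᵥ M *ᵥ v := by
    rw [dotProduct_mulVec, ← mulVec_transpose, hM.eq, dotProduct_comm]
  simp only [quadraticObjective, mulVec_add, mulVec_smul, dotProduct_add, add_dotProduct,
    dotProduct_smul, smul_dotProduct, dotProduct_sub, smul_eq_mul, hsymm, dotProduct_comm g]
  ring

theorem mulVec_eq_of_forall_quadraticObjective_le {M : Matrix n n 𝕜} (hM : M.IsSymm)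
    {g v : n → 𝕜} (hv : ∀ u, quadraticObjective M g v ≤ quadraticObjective M g u) : M *ᵥ v = g := by
  set r := M *ᵥ v - g
  have hr : r ⬝ᵥ r = 0 :=
    eq_zero_of_forall_nonneg_mul_add_mul_sq (a := (1 / 2) * (r ⬝ᵥ M *ᵥ r)) fun t => by
      have := hv (v + t • r)
      rw [quadraticObjective_add_smul hM] at this
      linarith
  exact sub_eq_zero.mp (dotProduct_self_eq_zero.mp hr)

end Quadratic

/-- First-order condition for the GSP-MAP filter `f₂`: any diagonal minimizer of
`½ trace(C_w F₂ C_x⁻¹ F₂) − trace(G̃ F₂) + ½ trace(C_w F₂ A F₂)` over diagonal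
matrices, with `A = G̃ᵀ C_w⁻¹ G̃`, has diagonal
`(C_w ∘ C_x⁻¹ + C_w ∘ A)⁻¹ diag(G̃)`. -/
theorem gsp_map_filter2_foc {N : ℕ}
    (Cx Cw Gt : Matrix (Fin N) (Fin N) ℝ)
    (hCx : Cx.PosDef) (hCw : Cw.PosDef) :
    let A : Matrix (Fin N) (Fin N) ℝ := Gtᵀ * Cw⁻¹ * Gt
    let J : (Fin N → ℝ) → ℝ := fun v =>
      (1 / 2) * Matrix.trace (Cw * Matrix.diagonal v * Cx⁻¹ * Matrix.diagonal v) -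
        Matrix.trace (Gt * Matrix.diagonal v) +
        (1 / 2) * Matrix.trace (Cw * Matrix.diagonal v * A * Matrix.diagonal v)
    IsUnit (Matrix.hadamard Cw (Cx⁻¹ + A)) →
      ∀ v : Fin N → ℝ, (∀ u, J v ≤ J u) →
        v = (Matrix.hadamard Cw Cx⁻¹ + Matrix.hadamard Cw A)⁻¹ *ᵥ
          (fun i => Gt i i) := by
  intro A J hM v hv
  have hCxInv : Cx⁻¹.IsSymm := isHermitian_iff_isSymm.mp hCx.isHermitian.inv
  have hA : A.IsSymm := by
    simpa only [A, conjTranspose_eq_transpose_of_trivial, isHermitian_iff_isSymm] using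
      isHermitian_conjTranspose_mul_mul Gt hCw.isHermitian.inv
  have hJ : J = quadraticObjective (Cw ⊙ (Cx⁻¹ + A)) Gt.diag := by
    funext u
    simp only [J, quadraticObjective]
    rw [trace_mul_diagonal_mul_mul_diagonal, trace_mul_diagonal_mul_mul_diagonal,
      trace_mul_diagonal, hCxInv.eq, hA.eq, hadamard_add, add_mulVec, dotProduct_add]
    ring
  have hsymm : (Cw ⊙ (Cx⁻¹ + A)).IsSymm :=
    isHermitian_iff_isSymm.mp <|
      hCw.isHermitian.hadamard (isHermitian_iff_isSymm.mpr (hCxInv.add hA))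
  have hMv := mulVec_eq_of_forall_quadraticObjective_le hsymm (hJ ▸ hv)
  change v = _ *ᵥ Gt.diag
  rw [← hadamard_add, ← hMv, mulVec_mulVec,
    nonsing_inv_mul _ ((isUnit_iff_isUnit_det _).mp hM), one_mulVec]
end
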